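/- (Voorneveld's amalgamation characterization) x* ∈ X_m is a Pareto-optimal security strategy of A = (A(1),…,A(k)) if and only if there exists α ∈ X_k^> such that x* is a minimax strategy of the scalar matrix game M(α_1A(1),…,α_kA(k)), the matrix with m rows and ∏_ℓ n_ℓ columns indexed by tuples c = (c(1),…,c(k)), whose (i,c) entry is Σ_ℓ α_ℓ A(ℓ)_{i,c(ℓ)}. -/

import Mathlib

open Matrix BigOperators

/-- Security level vector of `x` (maximum entry of `xᵀA(ℓ)` in each criterion). -/
noncomputable def secVec {k m : ℕ} {n : Fin k → ℕ}
    (A : ∀ ℓ, Matrix (Fin m) (Fin (n ℓ)) ℝ) (x : Fin m → ℝ) : Fin k → ℝ :=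
  fun ℓ => ⨆ j, (x ᵥ* A ℓ) j

/-- `x*` is a Pareto-optimal security strategy. -/
noncomputable def IsPOSS {k m : ℕ} {n : Fin k → ℕ}
    (A : ∀ ℓ, Matrix (Fin m) (Fin (n ℓ)) ℝ) (xstar : Fin m → ℝ) : Prop :=
  xstar ∈ stdSimplex ℝ (Fin m) ∧
    ¬ ∃ x ∈ stdSimplex ℝ (Fin m), secVec A x ≤ secVec A xstar ∧ secVec A x ≠ secVec A xstar

/-- The amalgamated matrix `M(α₁A(1),…,α_kA(k))`, with columns indexed by tuples
`c = (c(1),…,c(k))` and entries `Σ_ℓ α_ℓ A(ℓ)_{i,c(ℓ)}`. -/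
def amalgam {k m : ℕ} {n : Fin k → ℕ}
    (A : ∀ ℓ, Matrix (Fin m) (Fin (n ℓ)) ℝ) (α : Fin k → ℝ) :
    Matrix (Fin m) (∀ ℓ, Fin (n ℓ)) ℝ :=
  fun i c => ∑ ℓ, α ℓ * A ℓ i (c ℓ)

/-- `x*` is a minimax strategy of a scalar matrix game `B`. -/
noncomputable def IsMinimaxStrategy {m : ℕ} {J : Type*} [Fintype J]
    (B : Matrix (Fin m) J ℝ) (xstar : Fin m → ℝ) : Prop :=
  xstar ∈ stdSimplex ℝ (Fin m) ∧
    ∀ x ∈ stdSimplex ℝ (Fin m), (⨆ j, (xstar ᵥ* B) j) ≤ ⨆ j, (x ᵥ* B) j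

open Finset Topology

/-- Conic Carathéodory: any nonneg combination can be rewritten with linearly
independent support. -/
lemma cone_caratheodory {ι : Type*} [Fintype ι] [DecidableEq ι] {E : Type*} [AddCommGroup E] [Module ℝ E]
    (v : ι → E) :
    ∀ (N : ℕ) (c : ι → ℝ), (univ.filter (fun i => c i ≠ 0)).card ≤ N → (∀ i, 0 ≤ c i) →
    ∃ d : ι → ℝ, (∀ i, 0 ≤ d i) ∧ ∑ i, d i • v i = ∑ i, c i • v i ∧
      LinearIndependent ℝ (fun i : {i // d i ≠ 0} => v i) := by
  intro N
  induction N with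
  | zero =>
    intro c hcard hc
    refine ⟨c, hc, rfl, ?_⟩
    have : ∀ i, c i = 0 := by
      intro i
      by_contra h
      have : (univ.filter (fun i => c i ≠ 0)).Nonempty := ⟨i, by simp [h]⟩
      have := Finset.card_pos.2 this
      omega
    have : IsEmpty {i // c i ≠ 0} := ⟨fun ⟨i, hi⟩ => hi (this i)⟩
    exact linearIndependent_empty_type
  | succ N ih =>
    intro c hcard hc
    by_cases hli : LinearIndependent ℝ (fun i : {i // c i ≠ 0} => v i)
    · exact ⟨c, hc, rfl, hli⟩
    · -- get a nontrivial relation supported on the support of c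
      obtain ⟨g₀, hg₀sum, i₁, hg₀i₁⟩ := Fintype.not_linearIndependent_iff.1 hli
      -- extend to ι
      set G : ι → ℝ := fun i => if h : c i ≠ 0 then g₀ ⟨i, h⟩ else 0 with hG
      have hGsupp : ∀ i, G i ≠ 0 → c i ≠ 0 := by
        intro i hGi
        by_contra h
        simp [hG, h] at hGi
      have hGsum : ∑ i, G i • v i = 0 := by
        rw [← Finset.sum_filter_add_sum_filter_not univ (fun i => c i ≠ 0)]
        have h2 : ∑ i ∈ univ.filter (fun i => ¬ c i ≠ 0), G i • v i = 0 := by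
          apply Finset.sum_eq_zero
          intro i hi
          simp only [mem_filter] at hi
          simp [hG, hi.2]
        rw [h2, add_zero]
        rw [Finset.sum_subtype (p := fun i => c i ≠ 0) (filter (fun i => c i ≠ 0) univ) (by simp) (fun i => G i • v i)]
        rw [← hg₀sum]
        apply Finset.sum_congr rfl
        intro ⟨i, hi⟩ _
        simp [hG, hi]
      have key : ∀ g : ι → ℝ, (∀ i, g i ≠ 0 → c i ≠ 0) → ∑ i, g i • v i = 0 →
          (∃ i, 0 < g i) →
          ∃ d : ι → ℝ, (∀ i, 0 ≤ d i) ∧ ∑ i, d i • v i = ∑ i, c i • v i ∧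
            LinearIndependent ℝ (fun i : {i // d i ≠ 0} => v i) := by
        intro g hgsupp hgsum hgpos
        set T : Finset ι := univ.filter (fun i => 0 < g i) with hT
        have hTne : T.Nonempty := by
          obtain ⟨i, hi⟩ := hgpos
          exact ⟨i, by simp [hT, hi]⟩
        obtain ⟨i₀, hi₀T, hi₀⟩ := T.exists_mem_eq_inf' hTne (fun i => c i / g i)
        set r : ℝ := T.inf' hTne (fun i => c i / g i) with hr
        have hgi₀ : 0 < g i₀ := by simpa [hT] using hi₀T
        have hrnn : 0 ≤ r := by
          rw [hi₀]
          exact div_nonneg (hc i₀) hgi₀.le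
        set c' : ι → ℝ := fun i => c i - r * g i with hc'
        have hc'nn : ∀ i, 0 ≤ c' i := by
          intro i
          by_cases hgi : 0 < g i
          · have : r ≤ c i / g i := Finset.inf'_le _ (by simp [hT, hgi])
            have := (le_div_iff₀ hgi).1 this
            simp only [hc']
            linarith
          · push_neg at hgi
            have : r * g i ≤ 0 := mul_nonpos_of_nonneg_of_nonpos hrnn hgi
            simp only [hc']
            nlinarith [hc i]
        have hc'sum : ∑ i, c' i • v i = ∑ i, c i • v i := by
          simp only [hc', sub_smul, Finset.sum_sub_distrib, mul_smul]
          rw [← Finset.smul_sum, hgsum, smul_zero, sub_zero]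
        have hc'i₀ : c' i₀ = 0 := by
          simp only [hc', hi₀]
          field_simp
          ring
        have hc'supp : ∀ i, c' i ≠ 0 → c i ≠ 0 := by
          intro i hci'
          by_contra h
          have hgi : g i = 0 := by
            by_contra hgi
            exact (hgsupp i hgi) h
          simp [hc', h, hgi] at hci'
        have hsub : univ.filter (fun i => c' i ≠ 0) ⊆
            (univ.filter (fun i => c i ≠ 0)).erase i₀ := by
          intro i hi
          simp only [mem_filter, mem_univ, true_and] at hi
          refine Finset.mem_erase.2 ⟨?_, by simp only [mem_filter, mem_univ, true_and]; exact hc'supp i hi⟩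
          rintro rfl
          exact hi hc'i₀
        have hi₀mem : i₀ ∈ univ.filter (fun i => c i ≠ 0) := by
          simp [hgsupp i₀ (ne_of_gt hgi₀)]
        have hcard' : (univ.filter (fun i => c' i ≠ 0)).card ≤ N := by
          have h1 := Finset.card_le_card hsub
          have h2 := Finset.card_erase_of_mem hi₀mem
          have h3 := Finset.card_pos.2 ⟨i₀, hi₀mem⟩
          omega
        obtain ⟨d, hd1, hd2, hd3⟩ := ih c' hcard' hc'nn
        exact ⟨d, hd1, hd2.trans hc'sum, hd3⟩
      by_cases hpos : ∃ i, 0 < G i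
      · exact key G hGsupp hGsum hpos
      · push_neg at hpos
        have hGi₁ : G (i₁ : ι) ≠ 0 := by simpa [hG, i₁.2] using hg₀i₁
        refine key (fun i => -G i) (fun i hi => hGsupp i (by simpa using hi)) ?_ ?_
        · simp [neg_smul, hGsum]
        · exact ⟨i₁, by have := hpos (i₁ : ι); cases (lt_or_eq_of_le this) with
            | inl h => exact neg_pos.2 h
            | inr h => exact absurd h hGi₁⟩


section
variable {ι : Type*} [Fintype ι] [DecidableEq ι] {E : Type*}
  [NormedAddCommGroup E] [NormedSpace ℝ E] [FiniteDimensional ℝ E]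

lemma isClosed_coneGen_indep (v : ι → E) (S : Finset ι)
    (hS : LinearIndependent ℝ (fun i : S => v i)) :
    IsClosed {x : E | ∃ c : ι → ℝ, (∀ i, 0 ≤ c i) ∧ (∀ i, c i ≠ 0 → i ∈ S) ∧
      x = ∑ i, c i • v i} := by
  classical
  let L : ({i // i ∈ S} → ℝ) →ₗ[ℝ] E :=
    { toFun := fun c => ∑ i : {i // i ∈ S}, c i • v i
      map_add' := by intro a b; simp [add_smul, Finset.sum_add_distrib]
      map_smul' := by intro r a; simp [mul_smul, Finset.smul_sum] }
  have hLinj : LinearMap.ker L = ⊥ := by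
    rw [LinearMap.ker_eq_bot']
    intro g hg
    funext i
    exact Fintype.linearIndependent_iff.1 hS g hg i
  have hembed : IsClosedEmbedding L := L.isClosedEmbedding_of_injective hLinj
  have hset : {x : E | ∃ c : ι → ℝ, (∀ i, 0 ≤ c i) ∧ (∀ i, c i ≠ 0 → i ∈ S) ∧
      x = ∑ i, c i • v i} = L '' {c | ∀ i, 0 ≤ c i} := by
    ext x
    constructor
    · rintro ⟨c, hc0, hcS, rfl⟩
      refine ⟨fun i => c i, fun i => hc0 i, ?_⟩
      show ∑ i : {i // i ∈ S}, c i • v i = _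
      rw [Finset.sum_coe_sort S (fun i => c i • v i)]
      apply Finset.sum_subset (Finset.subset_univ S)
      intro i _ hiS
      have : c i = 0 := by
        by_contra h
        exact hiS (hcS i h)
      simp [this]
    · rintro ⟨c, hc0, rfl⟩
      refine ⟨fun i => if h : i ∈ S then c ⟨i, h⟩ else 0, ?_, ?_, ?_⟩
      · intro i
        by_cases h : i ∈ S
        · simpa [h] using hc0 ⟨i, h⟩
        · simp [h]
      · intro i hi
        by_contra h
        simp [h] at hi
      · show (L c : E) = _
        show ∑ i : {i // i ∈ S}, c i • v i =
          ∑ i : ι, (if h : i ∈ S then c ⟨i, h⟩ else 0) • v i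
        rw [← Finset.sum_subset (Finset.subset_univ S)
          (fun i _ hiS => by simp [hiS])]
        rw [← Finset.sum_attach S
          (fun i => (if h : i ∈ S then c ⟨i, h⟩ else 0) • v i)]
        rw [Finset.univ_eq_attach]
        apply Finset.sum_congr rfl
        intro ⟨i, hi⟩ _
        simp [hi]
  rw [hset]
  apply hembed.isClosedMap
  have : {c : {i // i ∈ S} → ℝ | ∀ i, 0 ≤ c i} = ⋂ i, {c | 0 ≤ c i} := by
    ext c; simp [Set.mem_iInter]
  rw [this]
  exact isClosed_iInter (fun i => isClosed_le continuous_const (continuous_apply i))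
/-- A finitely generated cone is closed. -/
lemma isClosed_coneGen (v : ι → E) :
    IsClosed {x : E | ∃ c : ι → ℝ, (∀ i, 0 ≤ c i) ∧ x = ∑ i, c i • v i} := by
  classical
  have heq : {x : E | ∃ c : ι → ℝ, (∀ i, 0 ≤ c i) ∧ x = ∑ i, c i • v i} =
      ⋃ S ∈ {S : Finset ι | LinearIndependent ℝ (fun i : S => v i)},
        {x : E | ∃ c : ι → ℝ, (∀ i, 0 ≤ c i) ∧ (∀ i, c i ≠ 0 → i ∈ S) ∧
          x = ∑ i, c i • v i} := by
    ext x
    simp only [Set.mem_iUnion, Set.mem_setOf_eq, exists_prop]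
    constructor
    · rintro ⟨c, hc0, rfl⟩
      obtain ⟨d, hd0, hdsum, hdli⟩ := cone_caratheodory v
        ((univ.filter (fun i => c i ≠ 0)).card) c le_rfl hc0
      refine ⟨univ.filter (fun i => d i ≠ 0), ?_, d, hd0, by simp, hdsum.symm⟩
      let e : {i // i ∈ univ.filter (fun i => d i ≠ 0)} ≃ {i // d i ≠ 0} :=
        Equiv.subtypeEquivRight (by simp)
      have hfun : ((fun i : {i // d i ≠ 0} => v ↑i) ∘ ⇑e) =
          (fun i : {i // i ∈ univ.filter (fun i => d i ≠ 0)} => v ↑i) := by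
        funext ⟨i, hi⟩
        simp [e, Equiv.subtypeEquivRight]
        rfl
      rw [← hfun]
      exact hdli.comp e e.injective
    · rintro ⟨S, _, c, hc0, _, rfl⟩
      exact ⟨c, hc0, rfl⟩
  rw [heq]
  exact Set.Finite.isClosed_biUnion (Set.toFinite _)
    (fun S hS => isClosed_coneGen_indep v S hS)

/-- Farkas' lemma, cone version. -/
lemma farkas_cone (v : ι → E) (w : E)
    (h : ∀ f : E →L[ℝ] ℝ, (∀ i, f (v i) ≤ 0) → f w ≤ 0) :
    ∃ y : ι → ℝ, (∀ i, 0 ≤ y i) ∧ w = ∑ i, y i • v i := by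
  classical
  by_contra hw
  set K := {x : E | ∃ c : ι → ℝ, (∀ i, 0 ≤ c i) ∧ x = ∑ i, c i • v i} with hK
  have hKconv : Convex ℝ K := by
    rintro x ⟨cx, hcx0, rfl⟩ y ⟨cy, hcy0, rfl⟩ a b ha hb _
    refine ⟨fun i => a * cx i + b * cy i,
      fun i => add_nonneg (mul_nonneg ha (hcx0 i)) (mul_nonneg hb (hcy0 i)), ?_⟩
    simp [add_smul, mul_smul, Finset.sum_add_distrib, Finset.smul_sum]
  have hwK : w ∉ K := by
    intro ⟨y, hy0, hyw⟩
    exact hw ⟨y, hy0, hyw⟩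
  obtain ⟨f, s, hf1, hf2⟩ :=
    geometric_hahn_banach_closed_point hKconv (isClosed_coneGen v) hwK
  have h0K : (0 : E) ∈ K := ⟨0, by simp, by simp⟩
  have hs0 : 0 < s := by simpa using hf1 0 h0K
  have hfle : ∀ x ∈ K, f x ≤ 0 := by
    rintro x ⟨c, hc0, rfl⟩
    by_contra hpos
    push_neg at hpos
    have hmem : ((s + 1) / f (∑ i, c i • v i)) • (∑ i, c i • v i) ∈ K := by
      refine ⟨fun i => ((s + 1) / f (∑ i, c i • v i)) * c i,
        fun i => mul_nonneg (div_nonneg (by linarith) hpos.le) (hc0 i), ?_⟩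
      simp [mul_smul, Finset.smul_sum]
    have := hf1 _ hmem
    rw [_root_.map_smul] at this
    rw [smul_eq_mul, div_mul_cancel₀ _ (ne_of_gt hpos)] at this
    linarith
  have hvK : ∀ i, f (v i) ≤ 0 := by
    intro i
    refine hfle (v i) ⟨fun j => if j = i then 1 else 0, fun j => by by_cases h : j = i <;> simp [h], ?_⟩
    simp [ite_smul]
  have := h f hvK
  linarith [hf2]

end


lemma secVec_le_iff {k m : ℕ} {n : Fin k → ℕ}
    (A : ∀ ℓ, Matrix (Fin m) (Fin (n ℓ)) ℝ) (x : Fin m → ℝ) (ℓ : Fin k) (t : ℝ)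
    (hpos : 0 < n ℓ) (h : ∀ j, (x ᵥ* A ℓ) j ≤ t) : secVec A x ℓ ≤ t :=
  haveI : Nonempty (Fin (n ℓ)) := ⟨⟨0, hpos⟩⟩
  ciSup_le h

lemma le_secVec {k m : ℕ} {n : Fin k → ℕ}
    (A : ∀ ℓ, Matrix (Fin m) (Fin (n ℓ)) ℝ) (x : Fin m → ℝ) (ℓ : Fin k)
    (j : Fin (n ℓ)) : (x ᵥ* A ℓ) j ≤ secVec A x ℓ :=
  le_ciSup (Set.Finite.bddAbove (Set.finite_range _)) j

/-- the key identity: value of the amalgamated game at `x` is the weighted sum of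
security levels, for nonnegative weights. -/
lemma sup_amalgam_eq {k m : ℕ} {n : Fin k → ℕ} (hn : ∀ ℓ, 0 < n ℓ)
    (A : ∀ ℓ, Matrix (Fin m) (Fin (n ℓ)) ℝ) (α : Fin k → ℝ) (hα : ∀ ℓ, 0 ≤ α ℓ)
    (x : Fin m → ℝ) :
    (⨆ c : (∀ ℓ, Fin (n ℓ)), (x ᵥ* amalgam A α) c) = ∑ ℓ, α ℓ * secVec A x ℓ := by
  haveI : ∀ ℓ, Nonempty (Fin (n ℓ)) := fun ℓ => ⟨⟨0, hn ℓ⟩⟩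
  have hentry : ∀ c : (∀ ℓ, Fin (n ℓ)),
      (x ᵥ* amalgam A α) c = ∑ ℓ, α ℓ * (x ᵥ* A ℓ) (c ℓ) := by
    intro c
    simp only [Matrix.vecMul, dotProduct, amalgam, Finset.mul_sum]
    rw [Finset.sum_comm]
    refine Finset.sum_congr rfl (fun ℓ _ => Finset.sum_congr rfl (fun i _ => by ring))
  have hex : ∀ ℓ : Fin k, ∃ j, ∀ j', (x ᵥ* A ℓ) j' ≤ (x ᵥ* A ℓ) j := by
    intro ℓ
    exact Finite.exists_max _
  choose jmax hjmax using hex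
  have hsec : ∀ ℓ, secVec A x ℓ = (x ᵥ* A ℓ) (jmax ℓ) := fun ℓ =>
    le_antisymm (ciSup_le (hjmax ℓ)) (le_secVec A x ℓ (jmax ℓ))
  apply le_antisymm
  · refine ciSup_le (fun c => ?_)
    rw [hentry]
    exact Finset.sum_le_sum (fun ℓ _ =>
      mul_le_mul_of_nonneg_left (le_secVec A x ℓ (c ℓ)) (hα ℓ))
  · have : ∑ ℓ, α ℓ * secVec A x ℓ = (x ᵥ* amalgam A α) (fun ℓ => jmax ℓ) := by
      rw [hentry]
      exact Finset.sum_congr rfl (fun ℓ _ => by rw [hsec])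
    rw [this]
    exact le_ciSup (Set.Finite.bddAbove (Set.finite_range _)) _

lemma single_dot {N : ℕ} (a : Fin N → ℝ) (i : Fin N) :
    ∑ j, (Pi.single i (1:ℝ) : Fin N → ℝ) j * a j = a i := by
  simp [Pi.single_apply, ite_mul]

lemma dot_single {N : ℕ} (a : Fin N → ℝ) (i : Fin N) :
    ∑ j, a j * (Pi.single i (1:ℝ) : Fin N → ℝ) j = a i := by
  simp [Pi.single_apply, mul_ite]


/-- The generators of the Farkas cone used in the hard direction. -/
def vgens {k m : ℕ} {n : Fin k → ℕ} (A : ∀ ℓ, Matrix (Fin m) (Fin (n ℓ)) ℝ)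
    (tstar : Fin k → ℝ) :
    (Fin m ⊕ (Unit ⊕ (Unit ⊕ ((Σ ℓ : Fin k, Fin (n ℓ)) ⊕ (Fin k ⊕ Unit))))) →
      (Fin m → ℝ) × (Fin k → ℝ) × ℝ
  | Sum.inl i => (Pi.single i 1, 0, 0)
  | Sum.inr (Sum.inl _) => (fun _ => -1, 0, 1)
  | Sum.inr (Sum.inr (Sum.inl _)) => (fun _ => 1, 0, -1)
  | Sum.inr (Sum.inr (Sum.inr (Sum.inl p))) => (fun i => -A p.1 i p.2, Pi.single p.1 1, 0)
  | Sum.inr (Sum.inr (Sum.inr (Sum.inr (Sum.inl ℓ)))) => (0, -Pi.single ℓ 1, tstar ℓ)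
  | Sum.inr (Sum.inr (Sum.inr (Sum.inr (Sum.inr _)))) => (0, 0, 1)

/-- Evaluation functional used against the Farkas certificate. -/
noncomputable def phiAux (m k : ℕ) (x : Fin m → ℝ) (t : Fin k → ℝ) :
    ((Fin m → ℝ) × (Fin k → ℝ) × ℝ) →ₗ[ℝ] ℝ where
  toFun p := (∑ i, x i * p.1 i) + (∑ ℓ, t ℓ * p.2.1 ℓ) + p.2.2
  map_add' p q := by
    simp only [Prod.fst_add, Prod.snd_add, Pi.add_apply, mul_add, Finset.sum_add_distrib]
    ring
  map_smul' r p := by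
    simp only [Prod.smul_fst, Prod.smul_snd, Pi.smul_apply, smul_eq_mul, RingHom.id_apply,
      Finset.mul_sum]
    rw [mul_add, mul_add, Finset.mul_sum, Finset.mul_sum]
    congr 1
    congr 1 <;> exact Finset.sum_congr rfl (fun i _ => by ring)

/-- Pi vector as a sum of single bumps. -/
lemma pi_sum_single {m : ℕ} (a : Fin m → ℝ) :
    a = ∑ i, a i • (Pi.single i (1 : ℝ) : Fin m → ℝ) := by
  funext j
  rw [Finset.sum_apply]
  simp [Pi.single_apply, mul_ite]

/-- Decomposition of a continuous linear functional on the product space. -/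
lemma clm_decomp {m k : ℕ} (f : ((Fin m → ℝ) × (Fin k → ℝ) × ℝ) →L[ℝ] ℝ)
    (a : Fin m → ℝ) (b : Fin k → ℝ) (s : ℝ) :
    f (a, b, s) = (∑ i, a i * f (Pi.single i 1, 0, 0)) +
      (∑ ℓ, b ℓ * f (0, Pi.single ℓ 1, 0)) + s * f (0, 0, 1) := by
  have h1 : ((a, b, s) : (Fin m → ℝ) × (Fin k → ℝ) × ℝ) =
      (∑ i, a i • ((Pi.single i 1, 0, 0) : (Fin m → ℝ) × (Fin k → ℝ) × ℝ)) +
      (∑ ℓ, b ℓ • ((0, Pi.single ℓ 1, 0) : (Fin m → ℝ) × (Fin k → ℝ) × ℝ)) +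
      s • ((0, 0, 1) : (Fin m → ℝ) × (Fin k → ℝ) × ℝ) := by
    refine Prod.ext ?_ (Prod.ext ?_ ?_)
    · simp only [Prod.fst_add, Prod.fst_sum, Prod.smul_fst, Prod.smul_snd, Prod.snd_sum,
        smul_zero, Finset.sum_const, add_zero]
      simpa using pi_sum_single a
    · simp only [Prod.snd_add, Prod.fst_add, Prod.snd_sum, Prod.fst_sum, Prod.smul_fst,
        Prod.smul_snd, smul_zero, add_zero]
      simpa using pi_sum_single b
    · simp [Prod.snd_sum]
  rw [h1, map_add, map_add, map_sum, map_sum, _root_.map_smul]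
  congr 1
  congr 1
  · exact Finset.sum_congr rfl (fun i _ => by rw [_root_.map_smul]; simp)
  · exact Finset.sum_congr rfl (fun i _ => by rw [_root_.map_smul]; simp)

/-- Voorneveld's amalgamation characterization of POSS. -/
theorem voorneveld_characterization (k m : ℕ) (hm : 0 < m) (hk : 0 < k)
    (n : Fin k → ℕ) (hn : ∀ ℓ, 0 < n ℓ)
    (A : ∀ ℓ, Matrix (Fin m) (Fin (n ℓ)) ℝ)
    (xstar : Fin m → ℝ) (hx : xstar ∈ stdSimplex ℝ (Fin m)) :
    IsPOSS A xstar ↔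
      ∃ α : Fin k → ℝ, (∀ ℓ, 0 < α ℓ) ∧ (∑ ℓ, α ℓ = 1) ∧
        IsMinimaxStrategy (amalgam A α) xstar := by
  classical
  haveI : Nonempty (Fin k) := ⟨⟨0, hk⟩⟩
  constructor
  · rintro ⟨hxΔ, hpareto⟩
    set tstar : Fin k → ℝ := secVec A xstar with htstar
    have hpar : ∀ x ∈ stdSimplex ℝ (Fin m), secVec A x ≤ tstar → secVec A x = tstar := by
      intro x hxm hle
      by_contra hne
      exact hpareto ⟨x, hxm, hle, hne⟩
    -- Farkas hypothesis
    have hfar : ∀ f : ((Fin m → ℝ) × (Fin k → ℝ) × ℝ) →L[ℝ] ℝ,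
        (∀ idx, f (vgens A tstar idx) ≤ 0) →
        f (((0 : Fin m → ℝ), (fun _ => (1:ℝ)), -∑ ℓ, tstar ℓ)) ≤ 0 := by
      intro f hf
      have h1 : ∀ i, f (Pi.single i 1, 0, 0) ≤ 0 := fun i => by
        simpa [vgens] using hf (Sum.inl i)
      have h6 : f (0, 0, 1) ≤ 0 := by
        simpa [vgens] using hf (Sum.inr (Sum.inr (Sum.inr (Sum.inr (Sum.inr ())))))
      have h2 : f (0, 0, 1) ≤ ∑ i, f (Pi.single i 1, 0, 0) := by
        have h := hf (Sum.inr (Sum.inl ()))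
        rw [show vgens A tstar (Sum.inr (Sum.inl ())) =
          ((fun _ => (-1:ℝ)), (0 : Fin k → ℝ), (1:ℝ)) from rfl, clm_decomp] at h
        simp only [Pi.zero_apply, zero_mul, Finset.sum_const_zero, add_zero, one_mul,
          neg_one_mul, Finset.sum_neg_distrib] at h
        linarith
      have h3 : ∑ i, f (Pi.single i 1, 0, 0) ≤ f (0, 0, 1) := by
        have h := hf (Sum.inr (Sum.inr (Sum.inl ())))
        rw [show vgens A tstar (Sum.inr (Sum.inr (Sum.inl ()))) =
          ((fun _ => (1:ℝ)), (0 : Fin k → ℝ), (-1:ℝ)) from rfl, clm_decomp] at h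
        simp only [Pi.zero_apply, zero_mul, Finset.sum_const_zero, add_zero, one_mul,
          neg_one_mul] at h
        linarith
      have h4 : ∀ (ℓ : Fin k) (j : Fin (n ℓ)),
          f (0, Pi.single ℓ 1, 0) ≤ ∑ i, A ℓ i j * f (Pi.single i 1, 0, 0) := by
        intro ℓ j
        have h := hf (Sum.inr (Sum.inr (Sum.inr (Sum.inl ⟨ℓ, j⟩))))
        rw [show vgens A tstar (Sum.inr (Sum.inr (Sum.inr (Sum.inl ⟨ℓ, j⟩)))) =
          ((fun i => -A ℓ i j), (Pi.single ℓ 1 : Fin k → ℝ), (0:ℝ)) from rfl,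
          clm_decomp] at h
        rw [single_dot (fun ℓ' => f (0, Pi.single ℓ' 1, 0)) ℓ] at h
        simp only [zero_mul, add_zero, neg_mul] at h
        rw [show ∑ i, -(A ℓ i j * f (Pi.single i 1, 0, 0)) =
            -∑ i, A ℓ i j * f (Pi.single i 1, 0, 0) from Finset.sum_neg_distrib _] at h
        linarith
      have h5 : ∀ ℓ : Fin k, f (0, 0, 1) * tstar ℓ ≤ f (0, Pi.single ℓ 1, 0) := by
        intro ℓ
        have h := hf (Sum.inr (Sum.inr (Sum.inr (Sum.inr (Sum.inl ℓ)))))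
        rw [show vgens A tstar (Sum.inr (Sum.inr (Sum.inr (Sum.inr (Sum.inl ℓ))))) =
          ((0 : Fin m → ℝ), (-Pi.single ℓ 1 : Fin k → ℝ), tstar ℓ) from rfl,
          clm_decomp] at h
        have hrw : ∑ ℓ', (-Pi.single ℓ 1 : Fin k → ℝ) ℓ' * f (0, Pi.single ℓ' 1, 0)
            = -f (0, Pi.single ℓ 1, 0) := by
          rw [show (∑ ℓ', (-Pi.single ℓ 1 : Fin k → ℝ) ℓ' * f (0, Pi.single ℓ' 1, 0))
            = ∑ ℓ', -((Pi.single ℓ 1 : Fin k → ℝ) ℓ' * f (0, Pi.single ℓ' 1, 0)) from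
            Finset.sum_congr rfl (fun ℓ' _ => by simp), Finset.sum_neg_distrib,
            single_dot (fun ℓ' => f (0, Pi.single ℓ' 1, 0)) ℓ]
        rw [hrw] at h
        simp only [Pi.zero_apply, zero_mul, Finset.sum_const_zero, zero_add] at h
        nlinarith [h]
      -- main goal of hfar
      rw [clm_decomp]
      simp only [Pi.zero_apply, zero_mul, Finset.sum_const_zero, zero_add, one_mul]
      rcases h6.lt_or_eq with hτ | hτ
      · -- f (0,0,1) < 0
        have hsum : ∑ i, f (Pi.single i 1, 0, 0) = f (0, 0, 1) := le_antisymm h3 h2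
        have hxhatΔ : (fun i => f (Pi.single i 1, 0, 0) / f (0, 0, 1)) ∈
            stdSimplex ℝ (Fin m) := by
          constructor
          · intro i
            rw [le_div_iff_of_neg hτ]
            simpa using h1 i
          · rw [← Finset.sum_div, hsum, div_self hτ.ne]
        have hsec : ∀ ℓ, secVec A (fun i => f (Pi.single i 1, 0, 0) / f (0, 0, 1)) ℓ ≤
            f (0, Pi.single ℓ 1, 0) / f (0, 0, 1) := by
          intro ℓ
          refine secVec_le_iff A _ ℓ _ (hn ℓ) (fun j => ?_)
          have hval : ((fun i => f (Pi.single i 1, 0, 0) / f (0, 0, 1)) ᵥ* A ℓ) j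
              = (∑ i, A ℓ i j * f (Pi.single i 1, 0, 0)) / f (0, 0, 1) := by
            simp only [Matrix.vecMul, dotProduct, Finset.sum_div]
            exact Finset.sum_congr rfl (fun i _ => by ring)
          rw [hval, div_le_div_right_of_neg hτ]
          exact h4 ℓ j
        have hsecle : secVec A (fun i => f (Pi.single i 1, 0, 0) / f (0, 0, 1)) ≤ tstar := by
          intro ℓ
          refine (hsec ℓ).trans ?_
          rw [div_le_iff_of_neg hτ]
          nlinarith [h5 ℓ]
        have heq := hpar _ hxhatΔ hsecle
        have hzt : ∀ ℓ, f (0, Pi.single ℓ 1, 0) = tstar ℓ * f (0, 0, 1) := by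
          intro ℓ
          have hts : tstar ℓ ≤ f (0, Pi.single ℓ 1, 0) / f (0, 0, 1) := by
            rw [← congrFun heq ℓ]
            exact hsec ℓ
          rw [le_div_iff_of_neg hτ] at hts
          nlinarith [h5 ℓ, hts]
        rw [Finset.sum_congr rfl (fun ℓ _ => hzt ℓ), ← Finset.sum_mul]
        nlinarith [h6]
      · -- f (0,0,1) = 0
        have hsum0 : ∑ i, f (Pi.single i 1, 0, 0) = 0 := le_antisymm (by linarith)
          (by linarith)
        have hzx0 : ∀ i, f (Pi.single i 1, 0, 0) = 0 := by
          intro i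
          exact (Finset.sum_eq_zero_iff_of_nonpos (fun i _ => h1 i)).1 hsum0 i
            (Finset.mem_univ i)
        have hzt0 : ∀ ℓ, f (0, Pi.single ℓ 1, 0) ≤ 0 := by
          intro ℓ
          have h40 := h4 ℓ ⟨0, hn ℓ⟩
          simp only [hzx0, mul_zero, Finset.sum_const_zero] at h40
          exact h40
        rw [hτ]
        simp only [mul_zero, add_zero]
        exact Finset.sum_nonpos (fun ℓ _ => hzt0 ℓ)
    obtain ⟨y, hy0, hyw⟩ := farkas_cone (vgens A tstar)
      (((0 : Fin m → ℝ), (fun _ => (1:ℝ)), -∑ ℓ, tstar ℓ)) hfar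
    have key : ∀ x ∈ stdSimplex ℝ (Fin m),
        ∑ ℓ, (1 + y (Sum.inr (Sum.inr (Sum.inr (Sum.inr (Sum.inl ℓ)))))) * tstar ℓ ≤
        ∑ ℓ, (1 + y (Sum.inr (Sum.inr (Sum.inr (Sum.inr (Sum.inl ℓ)))))) * secVec A x ℓ := by
      intro x hxm
      have hφ := congrArg (phiAux m k x (secVec A x)) hyw
      rw [map_sum] at hφ
      simp only [_root_.map_smul, smul_eq_mul] at hφ
      have hL : phiAux m k x (secVec A x)
          (((0 : Fin m → ℝ), (fun _ => (1:ℝ)), -∑ ℓ, tstar ℓ)) =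
          ∑ ℓ, secVec A x ℓ - ∑ ℓ, tstar ℓ := by
        simp only [phiAux, LinearMap.coe_mk, AddHom.coe_mk, Pi.zero_apply, mul_zero,
          Finset.sum_const_zero, mul_one, zero_add]
        ring
      have hsplit : ∑ idx, y idx * phiAux m k x (secVec A x) (vgens A tstar idx)
          = (∑ i, y (Sum.inl i) * phiAux m k x (secVec A x) (vgens A tstar (Sum.inl i)))
          + y (Sum.inr (Sum.inl ())) *
              phiAux m k x (secVec A x) (vgens A tstar (Sum.inr (Sum.inl ())))
          + y (Sum.inr (Sum.inr (Sum.inl ()))) *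
              phiAux m k x (secVec A x) (vgens A tstar (Sum.inr (Sum.inr (Sum.inl ()))))
          + (∑ p : (Σ ℓ : Fin k, Fin (n ℓ)), y (Sum.inr (Sum.inr (Sum.inr (Sum.inl p)))) *
              phiAux m k x (secVec A x) (vgens A tstar (Sum.inr (Sum.inr (Sum.inr (Sum.inl p))))))
          + (∑ ℓ, y (Sum.inr (Sum.inr (Sum.inr (Sum.inr (Sum.inl ℓ))))) *
              phiAux m k x (secVec A x) (vgens A tstar (Sum.inr (Sum.inr (Sum.inr (Sum.inr (Sum.inl ℓ)))))))
          + y (Sum.inr (Sum.inr (Sum.inr (Sum.inr (Sum.inr ()))))) *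
              phiAux m k x (secVec A x) (vgens A tstar (Sum.inr (Sum.inr (Sum.inr (Sum.inr (Sum.inr ())))))) := by
        simp only [Fintype.sum_sum_type]
        simp only [Finset.univ_unique, Finset.sum_singleton]
        ring
      have v1 : ∀ i, phiAux m k x (secVec A x) (vgens A tstar (Sum.inl i)) = x i := by
        intro i
        simp only [phiAux, vgens, LinearMap.coe_mk, AddHom.coe_mk, Pi.zero_apply, mul_zero,
          Finset.sum_const_zero, add_zero, dot_single]
      have v2 : phiAux m k x (secVec A x) (vgens A tstar (Sum.inr (Sum.inl ()))) = 0 := by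
        have hx1 := hxm.2
        simp only [phiAux, vgens, LinearMap.coe_mk, AddHom.coe_mk, Pi.zero_apply, mul_zero,
          Finset.sum_const_zero, add_zero, mul_neg, mul_one, Finset.sum_neg_distrib]
        linarith
      have v3 : phiAux m k x (secVec A x) (vgens A tstar (Sum.inr (Sum.inr (Sum.inl ())))) = 0 := by
        have hx1 := hxm.2
        simp only [phiAux, vgens, LinearMap.coe_mk, AddHom.coe_mk, Pi.zero_apply, mul_zero,
          Finset.sum_const_zero, add_zero, mul_one]
        linarith
      have v4 : ∀ p : (Σ ℓ : Fin k, Fin (n ℓ)),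
          0 ≤ phiAux m k x (secVec A x) (vgens A tstar (Sum.inr (Sum.inr (Sum.inr (Sum.inl p))))) := by
        intro ⟨ℓ, j⟩
        simp only [phiAux, vgens, LinearMap.coe_mk, AddHom.coe_mk, add_zero, dot_single]
        have hbd : (x ᵥ* A ℓ) j ≤ secVec A x ℓ := le_secVec A x ℓ j
        have hvm : (x ᵥ* A ℓ) j = ∑ i, x i * A ℓ i j := by
          simp [Matrix.vecMul, dotProduct]
        rw [hvm] at hbd
        have : ∑ i, x i * -A ℓ i j = -∑ i, x i * A ℓ i j := by
          rw [← Finset.sum_neg_distrib]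
          exact Finset.sum_congr rfl (fun i _ => by ring)
        rw [this]
        linarith
      have v5 : ∀ ℓ, phiAux m k x (secVec A x)
          (vgens A tstar (Sum.inr (Sum.inr (Sum.inr (Sum.inr (Sum.inl ℓ)))))) =
          tstar ℓ - secVec A x ℓ := by
        intro ℓ
        simp only [phiAux, vgens, LinearMap.coe_mk, AddHom.coe_mk, Pi.zero_apply, mul_zero,
          Finset.sum_const_zero, zero_add]
        rw [show (∑ ℓ', secVec A x ℓ' * (-Pi.single ℓ 1 : Fin k → ℝ) ℓ')
          = ∑ ℓ', -((Pi.single ℓ 1 : Fin k → ℝ) ℓ' * secVec A x ℓ') from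
          Finset.sum_congr rfl (fun ℓ' _ => by simp; ring), Finset.sum_neg_distrib,
          single_dot (fun ℓ' => secVec A x ℓ') ℓ]
        ring
      have v6 : phiAux m k x (secVec A x)
          (vgens A tstar (Sum.inr (Sum.inr (Sum.inr (Sum.inr (Sum.inr ())))))) = 1 := by
        simp only [phiAux, vgens, LinearMap.coe_mk, AddHom.coe_mk, Pi.zero_apply, mul_zero,
          Finset.sum_const_zero, zero_add, add_zero]
      rw [hL, hsplit, v2, v3, v6] at hφ
      have b1 : 0 ≤ ∑ i, y (Sum.inl i) * phiAux m k x (secVec A x) (vgens A tstar (Sum.inl i)) :=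
        Finset.sum_nonneg (fun i _ => by rw [v1]; exact mul_nonneg (hy0 _) (hxm.1 i))
      have b4 : 0 ≤ ∑ p : (Σ ℓ : Fin k, Fin (n ℓ)),
          y (Sum.inr (Sum.inr (Sum.inr (Sum.inl p)))) *
          phiAux m k x (secVec A x) (vgens A tstar (Sum.inr (Sum.inr (Sum.inr (Sum.inl p))))) :=
        Finset.sum_nonneg (fun p _ => mul_nonneg (hy0 _) (v4 p))
      have b6 : 0 ≤ y (Sum.inr (Sum.inr (Sum.inr (Sum.inr (Sum.inr ()))))) :=
        hy0 _
      have b5 : ∑ ℓ, y (Sum.inr (Sum.inr (Sum.inr (Sum.inr (Sum.inl ℓ))))) *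
          phiAux m k x (secVec A x) (vgens A tstar (Sum.inr (Sum.inr (Sum.inr (Sum.inr (Sum.inl ℓ)))))) =
          ∑ ℓ, y (Sum.inr (Sum.inr (Sum.inr (Sum.inr (Sum.inl ℓ))))) * (tstar ℓ - secVec A x ℓ) :=
        Finset.sum_congr rfl (fun ℓ _ => by rw [v5])
      rw [b5] at hφ
      have e1 : ∑ ℓ, (1 + y (Sum.inr (Sum.inr (Sum.inr (Sum.inr (Sum.inl ℓ)))))) * tstar ℓ =
          ∑ ℓ, tstar ℓ + ∑ ℓ, y (Sum.inr (Sum.inr (Sum.inr (Sum.inr (Sum.inl ℓ))))) * tstar ℓ := by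
        rw [← Finset.sum_add_distrib]
        exact Finset.sum_congr rfl (fun ℓ _ => by ring)
      have e2 : ∑ ℓ, (1 + y (Sum.inr (Sum.inr (Sum.inr (Sum.inr (Sum.inl ℓ)))))) * secVec A x ℓ =
          ∑ ℓ, secVec A x ℓ + ∑ ℓ, y (Sum.inr (Sum.inr (Sum.inr (Sum.inr (Sum.inl ℓ))))) * secVec A x ℓ := by
        rw [← Finset.sum_add_distrib]
        exact Finset.sum_congr rfl (fun ℓ _ => by ring)
      have e3 : ∑ ℓ, y (Sum.inr (Sum.inr (Sum.inr (Sum.inr (Sum.inl ℓ))))) * (tstar ℓ - secVec A x ℓ) =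
          ∑ ℓ, y (Sum.inr (Sum.inr (Sum.inr (Sum.inr (Sum.inl ℓ))))) * tstar ℓ -
          ∑ ℓ, y (Sum.inr (Sum.inr (Sum.inr (Sum.inr (Sum.inl ℓ))))) * secVec A x ℓ := by
        rw [← Finset.sum_sub_distrib]
        exact Finset.sum_congr rfl (fun ℓ _ => by ring)
      rw [e3] at hφ
      rw [e1, e2]
      linarith
    -- assemble α
    set T : ℝ := ∑ ℓ, (1 + y (Sum.inr (Sum.inr (Sum.inr (Sum.inr (Sum.inl ℓ)))))) with hT
    have hTpos : 0 < T := Finset.sum_pos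
      (fun ℓ _ => by have := hy0 (Sum.inr (Sum.inr (Sum.inr (Sum.inr (Sum.inl ℓ))))); linarith)
      Finset.univ_nonempty
    refine ⟨fun ℓ => (1 + y (Sum.inr (Sum.inr (Sum.inr (Sum.inr (Sum.inl ℓ)))))) / T,
      fun ℓ => div_pos (by have := hy0 (Sum.inr (Sum.inr (Sum.inr (Sum.inr (Sum.inl ℓ))))); linarith) hTpos,
      by rw [← Finset.sum_div, ← hT, div_self hTpos.ne'], ⟨hxΔ, ?_⟩⟩
    intro x hxm
    have hα0 : ∀ ℓ, (0:ℝ) ≤ (1 + y (Sum.inr (Sum.inr (Sum.inr (Sum.inr (Sum.inl ℓ)))))) / T :=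
      fun ℓ => le_of_lt (div_pos (by
        have := hy0 (Sum.inr (Sum.inr (Sum.inr (Sum.inr (Sum.inl ℓ))))); linarith) hTpos)
    rw [sup_amalgam_eq hn A _ hα0 xstar, sup_amalgam_eq hn A _ hα0 x]
    have hrw : ∀ u : Fin k → ℝ,
        ∑ ℓ, ((1 + y (Sum.inr (Sum.inr (Sum.inr (Sum.inr (Sum.inl ℓ)))))) / T) * u ℓ =
        (∑ ℓ, (1 + y (Sum.inr (Sum.inr (Sum.inr (Sum.inr (Sum.inl ℓ)))))) * u ℓ) / T := by
      intro u
      rw [Finset.sum_div]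
      exact Finset.sum_congr rfl (fun ℓ _ => by ring)
    rw [hrw, hrw, div_le_div_iff_of_pos_right hTpos]
    exact key x hxm
  · rintro ⟨α, hαpos, hαsum, hmin⟩
    refine ⟨hx, ?_⟩
    rintro ⟨x, hxm, hle, hne⟩
    have h1 := hmin.2 x hxm
    rw [sup_amalgam_eq hn A α (fun ℓ => (hαpos ℓ).le) xstar,
      sup_amalgam_eq hn A α (fun ℓ => (hαpos ℓ).le) x] at h1
    have h2 : ∑ ℓ, α ℓ * secVec A x ℓ < ∑ ℓ, α ℓ * secVec A xstar ℓ := by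
      obtain ⟨ℓ₀, hℓ₀⟩ := Function.ne_iff.1 hne
      refine Finset.sum_lt_sum
        (fun ℓ _ => mul_le_mul_of_nonneg_left (hle ℓ) (hαpos ℓ).le)
        ⟨ℓ₀, Finset.mem_univ _, ?_⟩
      exact mul_lt_mul_of_pos_left (lt_of_le_of_ne (hle ℓ₀) hℓ₀) (hαpos ℓ₀)
    linarith
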